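/- arXiv:1909.10896 — 2 statements merged into one kernel-verified Lean document; each statement's English description precedes it below -/
import Mathlib

section
/- Let l ∈ ℕ, let (S_i,+) for i = 1,…,l be countable adequate commutative partial semigroups, for each i let ⟨y_{i,n}⟩_{n=1}^∞ be an adequate sequence in S_i, and let 𝓛 be the set of all p ∈ δ(S_1 × … × S_l) such that for every A ∈ p and all m, k ∈ ℕ, there exists for each i ∈ {1,…,l} a weak product subsystem ⟨x_{i,n}⟩_{n=1}^m of ⟨y_{i,n}⟩_{n=k}^∞ with ×_{i=1}^l FS(⟨x_{i,n}⟩_{n=1}^m) ⊆ A. Then for all p, q ∈ 𝓛, the product ultrafilter p+q belongs to 𝓛. -/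
namespace PS

variable {S : Type*}

/-- Left-to-right sum of a list in a partial semigroup (`none` on the empty list). -/
def listSum (P : S → S → Option S) : List S → Option S
  | [] => none
  | [a] => some a
  | a :: b :: l => (listSum P (b :: l)).bind fun t => P a t

/-- The partial sum `∑_{t ∈ H} y t`, taken in increasing order of the indices. -/
def fsum (P : S → S → Option S) (y : ℕ → S) (H : Finset ℕ) : Option S :=
  listSum P ((H.sort (· ≤ ·)).map y)

/-- Associativity of a partial operation, in the strong (Kleene) sense. -/
def Assoc (P : S → S → Option S) : Prop :=
  ∀ a b c : S, (P a b).bind (fun t => P t c) = (P b c).bind fun t => P a t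

/-- Commutativity: `a + b = b + a` whenever either side is defined. -/
def Comm (P : S → S → Option S) : Prop := ∀ a b : S, P a b = P b a

/-- `φ(s) = {t : s + t is defined}`. -/
def phi (P : S → S → Option S) (s : S) : Set S := {t | (P s t).isSome}

/-- `σ(H) = ⋂_{s ∈ H} φ(s)`. -/
def sigma (P : S → S → Option S) (H : Finset S) : Set S :=
  {t | ∀ s ∈ H, (P s t).isSome = true}

/-- An adequate partial semigroup: `σ(H) ≠ ∅` for all finite nonempty `H`. -/
def Adequate (P : S → S → Option S) : Prop :=
  ∀ H : Finset S, H.Nonempty → (sigma P H).Nonempty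

/-- `FS(⟨x_n⟩_{n=m}^∞)`. -/
def FSfrom (P : S → S → Option S) (x : ℕ → S) (m : ℕ) : Set S :=
  {s | ∃ H : Finset ℕ, H.Nonempty ∧ (∀ n ∈ H, m ≤ n) ∧ fsum P x H = some s}

/-- `FS` of the first `m` terms of a sequence. -/
def FSfin (P : S → S → Option S) (x : ℕ → S) (m : ℕ) : Set S :=
  {s | ∃ H : Finset ℕ, H.Nonempty ∧ H ⊆ Finset.range m ∧ fsum P x H = some s}

/-- An adequate sequence. -/
def AdequateSeq (P : S → S → Option S) (x : ℕ → S) : Prop :=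
  (∀ F : Finset ℕ, F.Nonempty → (fsum P x F).isSome = true) ∧
  (∀ F : Finset S, F.Nonempty → ∃ m : ℕ, FSfrom P x m ⊆ sigma P F)

/-- `δS ⊆ βS`. -/
def deltaS (P : S → S → Option S) : Set (Ultrafilter S) :=
  {p | ∀ s : S, phi P s ∈ p}

/-- `-x + A = {y ∈ φ(x) : x + y ∈ A}`. -/
def shift (P : S → S → Option S) (x : S) (A : Set S) : Set S :=
  {y | ∃ z ∈ A, P x y = some z}

/-- `IsSum P r p q` expresses that `r = p + q` in `δS`:
`A ∈ p + q` iff `{x : -x + A ∈ q} ∈ p`. -/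
def IsSum (P : S → S → Option S) (r p q : Ultrafilter S) : Prop :=
  ∀ A : Set S, A ∈ r ↔ {x : S | shift P x A ∈ q} ∈ p

/-- A finite product subsystem `⟨y_n⟩_{n<m}` of `FS(⟨x_n⟩_{n=k}^∞)`. -/
def IsProdSubsysFin (P : S → S → Option S) (x : ℕ → S) (k m : ℕ) (y : ℕ → S) : Prop :=
  ∃ H : ℕ → Finset ℕ,
    (∀ n < m, (H n).Nonempty) ∧
    (∀ t ∈ H 0, k ≤ t) ∧
    (∀ n, n + 1 < m → ∀ s ∈ H n, ∀ t ∈ H (n + 1), s < t) ∧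
    (∀ n < m, fsum P x (H n) = some (y n))

/-- An infinite product subsystem `⟨y_n⟩_{n=0}^∞` of `FS(⟨x_n⟩_{n=k}^∞)`. -/
def IsProdSubsysInf (P : S → S → Option S) (x : ℕ → S) (k : ℕ) (y : ℕ → S) : Prop :=
  ∃ H : ℕ → Finset ℕ,
    (∀ n, (H n).Nonempty) ∧
    (∀ t ∈ H 0, k ≤ t) ∧
    (∀ n, ∀ s ∈ H n, ∀ t ∈ H (n + 1), s < t) ∧
    (∀ n, fsum P x (H n) = some (y n))

/-- `⟨x_n⟩_{n<m}` is a weak product subsystem of `⟨y_n⟩_{n=k}^∞`, witnessed by `H`. -/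
def IsWPSWith (P : S → S → Option S) (y : ℕ → S) (k m : ℕ) (x : ℕ → S)
    (H : ℕ → Finset ℕ) : Prop :=
  (∀ n < m, (H n).Nonempty) ∧
  (∀ n < m, ∀ t ∈ H n, k ≤ t) ∧
  (∀ n₁ < m, ∀ n₂ < m, n₁ ≠ n₂ → Disjoint (H n₁) (H n₂)) ∧
  (∀ n < m, fsum P y (H n) = some (x n))

/-- `⟨x_n⟩_{n<m}` is a weak product subsystem of `⟨y_n⟩_{n=k}^∞`. -/
def IsWPS (P : S → S → Option S) (y : ℕ → S) (k m : ℕ) (x : ℕ → S) : Prop :=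
  ∃ H : ℕ → Finset ℕ, IsWPSWith P y k m x H

/-- The coordinatewise partial operation on a finite product, defined exactly when
every coordinate operation is defined. -/
def prodOp {l : ℕ} {T : Fin l → Type*} (P : ∀ i, T i → T i → Option (T i)) :
    (∀ i, T i) → (∀ i, T i) → Option (∀ i, T i) := fun a b =>
  if h : ∀ i, (P i (a i) (b i)).isSome then
    some fun i => (P i (a i) (b i)).get (h i)
  else none

end PS
/-!
For `A ∈ p + q`, a weak product subsystem `u` given by `p` has its (finite) box of finite sums
inside `{x | -x + A ∈ q}`, so `q` contains the intersection of the sets `-g + A` over that box.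
A second subsystem `v` given by `q` for this intersection, chosen beyond every index used by `u`,
yields the subsystem `u n + v n`: each of its finite sums splits as `g + h` with `g` in the box of
`u` and `h` in the box of `v`, hence lies in `A`. Finite sums over disjoint blocks of the sequence
are compared by computing them in the commutative monoid obtained from a commutative partial
semigroup by adjoining an identity and an absorbing "undefined" element.
-/

namespace PS

variable {S : Type*}

inductive Totalization (P : S → S → Option S)
  | undef
  | one
  | of (a : S)

namespace Totalization

variable {P : S → S → Option S}

def ofOption : Option S → Totalization P
  | none => undef
  | some a => of a

def mul : Totalization P → Totalization P → Totalization P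
  | undef, _ => undef
  | _, undef => undef
  | one, b => b
  | a, one => a
  | of a, of b => ofOption (P a b)

instance : One (Totalization P) := ⟨one⟩

instance : Mul (Totalization P) := ⟨mul⟩

theorem ofOption_injective : Function.Injective (ofOption : Option S → Totalization P) := by
  rintro (_ | a) (_ | b) h <;> cases h <;> rfl

theorem ofOption_mul_ofOption (o₁ o₂ : Option S) :
    (ofOption o₁ * ofOption o₂ : Totalization P) =
      ofOption (o₁.bind fun a => o₂.bind (P a)) := by
  rcases o₁ with _ | a <;> rcases o₂ with _ | b <;> rfl

theorem of_mul_of (a b : S) : (of a * of b : Totalization P) = ofOption (P a b) := rfl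

theorem mul_undef (a : Totalization P) : a * undef = undef := by
  rcases a with _ | _ | a <;> rfl

theorem one_mul' (a : Totalization P) : one * a = a := by
  rcases a with _ | _ | a <;> rfl

theorem mul_one' (a : Totalization P) : a * one = a := by
  rcases a with _ | _ | a <;> rfl

theorem mul_assoc_of_assoc (ha : Assoc P) (a b c : Totalization P) :
    a * b * c = a * (b * c) := by
  rcases a with _ | _ | a
  · rfl
  · rw [one_mul', one_mul']
  rcases c with _ | _ | c
  · rw [mul_undef, mul_undef, mul_undef]
  · rw [mul_one', mul_one']
  rcases b with _ | _ | b
  · rfl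
  · rfl
  change ofOption (P a b) * ofOption (some c) = ofOption (some a) * ofOption (P b c)
  simp only [ofOption_mul_ofOption, Option.bind_some]
  exact congrArg ofOption (ha a b c)

theorem mul_comm_of_comm (hc : Comm P) (a b : Totalization P) : a * b = b * a := by
  rcases a with _ | _ | a <;> rcases b with _ | _ | b <;> try rfl
  exact congrArg ofOption (hc a b)

instance [Fact (Assoc P)] [Fact (Comm P)] : CommMonoid (Totalization P) where
  mul_assoc := mul_assoc_of_assoc Fact.out
  one_mul := one_mul'
  mul_one := mul_one'
  mul_comm := mul_comm_of_comm Fact.out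

theorem prod_map_of_eq_ofOption_listSum (l : List S) (hl : l ≠ []) :
    (l.map (of (P := P))).prod = ofOption (listSum P l) := by
  induction l with
  | nil => exact absurd rfl hl
  | cons a l ih =>
    rcases l with _ | ⟨b, l⟩
    · exact mul_one' _
    · rw [List.map_cons, List.prod_cons, ih (List.cons_ne_nil _ _)]
      exact ofOption_mul_ofOption (some a) _

variable [Fact (Assoc P)] [Fact (Comm P)]

theorem prod_of_eq_ofOption_fsum (y : ℕ → S) {H : Finset ℕ} (hH : H.Nonempty) :
    ∏ t ∈ H, (of (y t) : Totalization P) = ofOption (fsum P y H) := by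
  rw [Finset.prod_eq_multiset_prod, ← Finset.sort_eq H (· ≤ ·), Multiset.map_coe,
    Multiset.prod_coe, fsum, ← prod_map_of_eq_ofOption_listSum, List.map_map]
  · rfl
  · simpa [← List.length_pos_iff, Finset.length_sort] using hH.card_pos

end Totalization

section PartialSemigroup

variable {S : Type*} {P : S → S → Option S}

theorem fsum_union (ha : Assoc P) (hc : Comm P) (y : ℕ → S) {H K : Finset ℕ}
    (hd : Disjoint H K) (hH : H.Nonempty) (hK : K.Nonempty) :
    fsum P y (H ∪ K) = (fsum P y H).bind fun a => (fsum P y K).bind (P a) := by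
  have := Fact.mk ha
  have := Fact.mk hc
  apply Totalization.ofOption_injective (P := P)
  rw [← Totalization.ofOption_mul_ofOption, ← Totalization.prod_of_eq_ofOption_fsum y hH,
    ← Totalization.prod_of_eq_ofOption_fsum y hK,
    ← Totalization.prod_of_eq_ofOption_fsum y (hH.mono Finset.subset_union_left),
    Finset.prod_union hd]

theorem fsum_eq_bind_of_forall_eq_some (ha : Assoc P) (hc : Comm P) {u v w : ℕ → S}
    {G : Finset ℕ} (hw : ∀ n ∈ G, P (u n) (v n) = some (w n)) (hG : G.Nonempty) :
    fsum P w G = (fsum P u G).bind fun a => (fsum P v G).bind (P a) := by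
  have := Fact.mk ha
  have := Fact.mk hc
  apply Totalization.ofOption_injective (P := P)
  rw [← Totalization.ofOption_mul_ofOption, ← Totalization.prod_of_eq_ofOption_fsum u hG,
    ← Totalization.prod_of_eq_ofOption_fsum v hG, ← Totalization.prod_of_eq_ofOption_fsum w hG,
    ← Finset.prod_mul_distrib]
  refine Finset.prod_congr rfl fun n hn => ?_
  rw [Totalization.of_mul_of, hw n hn]
  rfl

theorem fsum_singleton (y : ℕ → S) (n : ℕ) : fsum P y {n} = some (y n) := by
  rw [fsum, Finset.sort_singleton]
  rfl

theorem mem_FSfin_of_lt (x : ℕ → S) {m n : ℕ} (hn : n < m) : x n ∈ FSfin P x m :=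
  ⟨{n}, Finset.singleton_nonempty n, Finset.singleton_subset_iff.mpr (Finset.mem_range.mpr hn),
    fsum_singleton x n⟩

theorem FSfin_finite (x : ℕ → S) (m : ℕ) : (FSfin P x m).Finite := by
  refine ((Finset.range m).powerset.finite_toSet.image (fsum P x)).preimage
    (Option.some_injective S).injOn |>.subset ?_
  rintro s ⟨H, -, hH, hs⟩
  exact ⟨H, Finset.mem_powerset.mpr hH, hs⟩

theorem exists_eq_some_of_mem_FSfin (ha : Assoc P) (hc : Comm P) {u v w : ℕ → S} {m : ℕ}
    (hw : ∀ n < m, P (u n) (v n) = some (w n)) {f : S} (hf : f ∈ FSfin P w m) :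
    ∃ g ∈ FSfin P u m, ∃ h ∈ FSfin P v m, P g h = some f := by
  obtain ⟨G, hG, hGm, hGf⟩ := hf
  rw [fsum_eq_bind_of_forall_eq_some ha hc (fun n hn => hw n (Finset.mem_range.mp (hGm hn))) hG,
    Option.bind_eq_some_iff] at hGf
  obtain ⟨g, hg, hgf⟩ := hGf
  obtain ⟨h, hh, hgh⟩ := Option.bind_eq_some_iff.mp hgf
  exact ⟨g, ⟨G, hG, hGm, hg⟩, h, ⟨G, hG, hGm, hh⟩, hgh⟩

theorem IsWPSWith.union (ha : Assoc P) (hc : Comm P) {y u v w : ℕ → S} {k k' m : ℕ}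
    {H K : ℕ → Finset ℕ} (hu : IsWPSWith P y k m u H) (hv : IsWPSWith P y k' m v K)
    (hkk' : k ≤ k') (hHk' : ∀ n < m, ∀ t ∈ H n, t < k')
    (hw : ∀ n < m, P (u n) (v n) = some (w n)) :
    IsWPSWith P y k m w fun n => H n ∪ K n := by
  obtain ⟨hHne, hHk, hHdisj, hHu⟩ := hu
  obtain ⟨hKne, hKk', hKdisj, hKv⟩ := hv
  have hHK : ∀ n₁ < m, ∀ n₂ < m, Disjoint (H n₁) (K n₂) := fun n₁ h₁ n₂ h₂ =>
    Finset.disjoint_left.mpr fun t htH htK => (hHk' n₁ h₁ t htH).not_ge (hKk' n₂ h₂ t htK)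
  refine ⟨fun n hn => (hHne n hn).mono Finset.subset_union_left, ?_, ?_, ?_⟩
  · intro n hn t ht
    rcases Finset.mem_union.mp ht with ht | ht
    · exact hHk n hn t ht
    · exact hkk'.trans (hKk' n hn t ht)
  · intro n₁ h₁ n₂ h₂ hne
    exact Finset.disjoint_union_left.mpr
      ⟨Finset.disjoint_union_right.mpr ⟨hHdisj n₁ h₁ n₂ h₂ hne, hHK n₁ h₁ n₂ h₂⟩,
        Finset.disjoint_union_right.mpr ⟨(hHK n₂ h₂ n₁ h₁).symm, hKdisj n₁ h₁ n₂ h₂ hne⟩⟩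
  · intro n hn
    rw [fsum_union ha hc y (hHK n hn n hn) (hHne n hn) (hKne n hn), hHu n hn, hKv n hn]
    exact hw n hn

end PartialSemigroup

section Sum

variable {α : Type*} {Q : α → α → Option α}

theorem shift_univ (x : α) : shift Q x Set.univ = phi Q x := by
  ext y
  simp [shift, phi, Option.isSome_iff_exists]

theorem shift_inter (x : α) (A B : Set α) :
    shift Q x (A ∩ B) = shift Q x A ∩ shift Q x B := by
  ext y
  constructor
  · rintro ⟨z, ⟨hzA, hzB⟩, hz⟩
    exact ⟨⟨z, hzA, hz⟩, z, hzB, hz⟩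
  · rintro ⟨⟨z, hzA, hz⟩, z', hzB, hz'⟩
    obtain rfl : z = z' := Option.some_injective _ (hz.symm.trans hz')
    exact ⟨z, ⟨hzA, hzB⟩, hz⟩

theorem shift_mono (x : α) {A B : Set α} (h : A ⊆ B) : shift Q x A ⊆ shift Q x B :=
  fun _ ⟨z, hzA, hz⟩ => ⟨z, h hzA, hz⟩

theorem shift_compl (x : α) (A : Set α) : shift Q x Aᶜ = phi Q x \ shift Q x A := by
  ext y
  constructor
  · rintro ⟨z, hzA, hz⟩
    refine ⟨Option.isSome_iff_exists.mpr ⟨z, hz⟩, fun ⟨z', hz'A, hz'⟩ => hzA ?_⟩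
    rwa [Option.some_injective _ (hz.symm.trans hz')]
  · rintro ⟨hy, hnot⟩
    obtain ⟨z, hz⟩ := Option.isSome_iff_exists.mp hy
    exact ⟨z, fun hzA => hnot ⟨z, hzA, hz⟩, hz⟩

theorem exists_isSum (p : Ultrafilter α) {q : Ultrafilter α} (hq : q ∈ deltaS Q) :
    ∃ r, IsSum Q r p q := by
  let F : Filter α :=
    { sets := {A | {x | shift Q x A ∈ q} ∈ p}
      univ_sets := Filter.univ_mem' fun x => by rw [Set.mem_ofPred_eq, shift_univ]; exact hq x
      sets_of_superset := fun hA hAB =>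
        Filter.mem_of_superset hA fun x hx => Filter.mem_of_superset hx (shift_mono x hAB)
      inter_sets := fun hA hB =>
        Filter.mem_of_superset (Filter.inter_mem hA hB) fun x ⟨hxA, hxB⟩ => by
          rw [Set.mem_ofPred_eq, shift_inter]
          exact Filter.inter_mem hxA hxB }
  have hcompl (A : Set α) : {x | shift Q x Aᶜ ∈ q} = {x | shift Q x A ∈ q}ᶜ := by
    ext x
    rw [Set.mem_ofPred_eq, Set.mem_compl_iff, Set.mem_ofPred_eq, shift_compl, Set.sdiff_eq,
      ← Ultrafilter.mem_coe, Filter.inter_mem_iff, Ultrafilter.mem_coe, Ultrafilter.mem_coe,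
      and_iff_right (hq x), Ultrafilter.compl_mem_iff_notMem]
  refine ⟨Ultrafilter.ofComplNotMemIff F fun A => ?_, fun A => Iff.rfl⟩
  change {x | shift Q x Aᶜ ∈ q} ∉ p ↔ _
  rw [hcompl, Ultrafilter.compl_notMem_iff]
  rfl

theorem IsSum.mem_deltaS (ha : Assoc Q) {p q r : Ultrafilter α} (hp : p ∈ deltaS Q)
    (hq : q ∈ deltaS Q) (hr : IsSum Q r p q) : r ∈ deltaS Q := by
  intro s
  rw [hr]
  refine Filter.mem_of_superset (hp s) fun x hx => ?_
  obtain ⟨t, ht⟩ := Option.isSome_iff_exists.mp hx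
  -- `(s + x) + y` defined forces `s + (x + y)` defined
  refine Filter.mem_of_superset (Filter.inter_mem (hq t) (hq x)) fun z ⟨htz, hxz⟩ => ?_
  obtain ⟨w, hw⟩ := Option.isSome_iff_exists.mp hxz
  refine ⟨w, ?_, hw⟩
  have hassoc := ha s x z
  rw [ht, hw, Option.bind_some, Option.bind_some] at hassoc
  rw [phi, Set.mem_ofPred_eq, ← hassoc]
  exact htz

end Sum

section Product

variable {l : ℕ} {S : Fin l → Type*} {P : ∀ i, S i → S i → Option (S i)}

theorem prodOp_eq_some_iff {a b c : ∀ i, S i} :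
    prodOp P a b = some c ↔ ∀ i, P i (a i) (b i) = some (c i) := by
  unfold prodOp
  split_ifs with h
  · rw [Option.some_inj, funext_iff]
    refine forall_congr' fun i => ?_
    rw [Option.eq_some_iff_get_eq]
    exact ⟨fun h' => ⟨h i, h'⟩, fun ⟨_, h'⟩ => h'⟩
  · refine iff_of_false (by simp) fun hc => h fun i => ?_
    rw [hc i]
    rfl

theorem assoc_prodOp (ha : ∀ i, Assoc (P i)) : Assoc (prodOp P) := by
  intro a b c
  refine Option.ext fun d => ?_
  have hcoord (i : Fin l) := (Option.ext_iff.mp (ha i (a i) (b i) (c i))) (d i)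
  simp only [Option.bind_eq_some_iff, prodOp_eq_some_iff] at hcoord ⊢
  constructor
  · rintro ⟨t, hab, htc⟩
    choose s hbc has using fun i => (hcoord i).mp ⟨t i, hab i, htc i⟩
    exact ⟨s, hbc, has⟩
  · rintro ⟨s, hbc, has⟩
    choose t hab htc using fun i => (hcoord i).mpr ⟨s i, hbc i, has i⟩
    exact ⟨t, hab, htc⟩

def FSbox (P : ∀ i, S i → S i → Option (S i)) (x : ∀ i, ℕ → S i) (m : ℕ) : Set (∀ i, S i) :=
  {f | ∀ i, f i ∈ FSfin (P i) (x i) m}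

def ContainsWPSBoxes (P : ∀ i, S i → S i → Option (S i)) (y : ∀ i, ℕ → S i)
    (A : Set (∀ i, S i)) : Prop :=
  ∀ m k : ℕ, ∃ x : ∀ i, ℕ → S i, (∀ i, IsWPS (P i) (y i) k m (x i)) ∧ FSbox P x m ⊆ A

theorem FSbox_finite (x : ∀ i, ℕ → S i) (m : ℕ) : (FSbox P x m).Finite :=
  Set.Finite.pi' fun i => FSfin_finite (x i) m

theorem column_mem_FSbox (x : ∀ i, ℕ → S i) {m n : ℕ} (hn : n < m) :
    (fun i => x i n) ∈ FSbox P x m :=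
  fun i => mem_FSfin_of_lt (x i) hn

theorem exists_isWPS_FSbox_subset (ha : ∀ i, Assoc (P i)) (hc : ∀ i, Comm (P i))
    {y u v : ∀ i, ℕ → S i} {k k' m : ℕ} {H K : Fin l → ℕ → Finset ℕ}
    (hu : ∀ i, IsWPSWith (P i) (y i) k m (u i) (H i))
    (hv : ∀ i, IsWPSWith (P i) (y i) k' m (v i) (K i))
    (hkk' : k ≤ k') (hHk' : ∀ i, ∀ n < m, ∀ t ∈ H i n, t < k') {A : Set (∀ i, S i)}
    (huv : ∀ g ∈ FSbox P u m, FSbox P v m ⊆ shift (prodOp P) g A) :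
    ∃ w : ∀ i, ℕ → S i, (∀ i, IsWPS (P i) (y i) k m (w i)) ∧ FSbox P w m ⊆ A := by
  have hcol (n : ℕ) : ∃ z : ∀ i, S i,
      n < m → prodOp P (fun i => u i n) (fun i => v i n) = some z := by
    by_cases hn : n < m
    · obtain ⟨z, -, hz⟩ := huv _ (column_mem_FSbox u hn) (column_mem_FSbox v hn)
      exact ⟨z, fun _ => hz⟩
    · exact ⟨fun i => u i n, fun h => absurd h hn⟩
  choose z hz using hcol
  have hw (i : Fin l) : ∀ n < m, P i (u i n) (v i n) = some (z n i) :=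
    fun n hn => prodOp_eq_some_iff.mp (hz n hn) i
  refine ⟨fun i n => z n i,
    fun i => ⟨_, (hu i).union (ha i) (hc i) (hv i) hkk' (hHk' i) (hw i)⟩, fun f hf => ?_⟩
  choose g hg h hh hgh using fun i => exists_eq_some_of_mem_FSfin (ha i) (hc i) (hw i) (hf i)
  obtain ⟨f', hf'A, hf'⟩ := huv g hg hh
  obtain rfl : f = f' := funext fun i =>
    Option.some_injective _ ((hgh i).symm.trans (prodOp_eq_some_iff.mp hf' i))
  exact hf'A

theorem IsSum.containsWPSBoxes (ha : ∀ i, Assoc (P i)) (hc : ∀ i, Comm (P i))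
    {y : ∀ i, ℕ → S i} {p q r : Ultrafilter (∀ i, S i)}
    (hp : ∀ A ∈ p, ContainsWPSBoxes P y A) (hq : ∀ A ∈ q, ContainsWPSBoxes P y A)
    (hr : IsSum (prodOp P) r p q) {A : Set (∀ i, S i)} (hA : A ∈ r) :
    ContainsWPSBoxes P y A := by
  intro m k
  obtain ⟨u, hu, huA⟩ := hp _ ((hr A).mp hA) m k
  choose H hH using hu
  have hC : (⋂ g ∈ FSbox P u m, shift (prodOp P) g A) ∈ q :=
    (Filter.biInter_mem (FSbox_finite u m)).mpr fun g hg => huA hg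
  obtain ⟨N, hN⟩ := (Set.finite_iUnion fun i => (Set.finite_Iio m).biUnion
    fun n _ => (H i n).finite_toSet).bddAbove
  obtain ⟨v, hv, hvC⟩ := hq _ hC m (max k (N + 1))
  choose K hK using hv
  refine exists_isWPS_FSbox_subset ha hc hH hK (le_max_left _ _) (fun i n hn t ht => ?_)
    fun g hg => hvC.trans (Set.biInter_subset_of_mem hg)
  have htN : t ≤ N := hN (Set.mem_iUnion.mpr ⟨i, Set.mem_biUnion hn ht⟩)
  omega

end Product

end PS

theorem statement5_general {l : ℕ} {S : Fin l → Type*}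
    (P : ∀ i, S i → S i → Option (S i))
    (hassoc : ∀ i, PS.Assoc (P i)) (hcomm : ∀ i, PS.Comm (P i))
    (y : ∀ i, ℕ → S i)
    (L : Set (Ultrafilter (∀ i, S i)))
    (hL : L = {p : Ultrafilter (∀ i, S i) | p ∈ PS.deltaS (PS.prodOp P) ∧
      ∀ A ∈ p, ∀ m k : ℕ, ∃ xx : ∀ i, ℕ → S i,
        (∀ i, PS.IsWPS (P i) (y i) k m (xx i)) ∧
        {f : ∀ i, S i | ∀ i, f i ∈ PS.FSfin (P i) (xx i) m} ⊆ A}) :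
    ∀ p ∈ L, ∀ q ∈ L,
      (∃ r : Ultrafilter (∀ i, S i), PS.IsSum (PS.prodOp P) r p q) ∧
      (∀ r : Ultrafilter (∀ i, S i), PS.IsSum (PS.prodOp P) r p q → r ∈ L) := by
  subst hL
  rintro p ⟨hpδ, hp⟩ q ⟨hqδ, hq⟩
  refine ⟨PS.exists_isSum p hqδ, fun r hr => ⟨?_, fun A hA => ?_⟩⟩
  · exact hr.mem_deltaS (PS.assoc_prodOp hassoc) hpδ hqδ
  · exact hr.containsWPSBoxes hassoc hcomm hp hq hA

/-- With `𝓛` as in Statement 4, for all `p, q ∈ 𝓛` the product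
ultrafilter `p + q` (exists and) belongs to `𝓛`. -/
theorem statement5 {l : ℕ} {S : Fin l → Type*} [∀ i, Countable (S i)]
    (P : ∀ i, S i → S i → Option (S i))
    (hassoc : ∀ i, PS.Assoc (P i)) (hcomm : ∀ i, PS.Comm (P i))
    (hadeq : ∀ i, PS.Adequate (P i))
    (y : ∀ i, ℕ → S i) (hy : ∀ i, PS.AdequateSeq (P i) (y i))
    (L : Set (Ultrafilter (∀ i, S i)))
    (hL : L = {p : Ultrafilter (∀ i, S i) | p ∈ PS.deltaS (PS.prodOp P) ∧
      ∀ A ∈ p, ∀ m k : ℕ, ∃ xx : ∀ i, ℕ → S i,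
        (∀ i, PS.IsWPS (P i) (y i) k m (xx i)) ∧
        {f : ∀ i, S i | ∀ i, f i ∈ PS.FSfin (P i) (xx i) m} ⊆ A}) :
    ∀ p ∈ L, ∀ q ∈ L,
      (∃ r : Ultrafilter (∀ i, S i), PS.IsSum (PS.prodOp P) r p q) ∧
      (∀ r : Ultrafilter (∀ i, S i), PS.IsSum (PS.prodOp P) r p q → r ∈ L) :=
  statement5_general P hassoc hcomm y L hL
end

section
/- Let l ∈ ℕ, let (S_i,+) for i = 1,…,l be countable adequate commutative partial semigroups, and for each i let ⟨y_{i,n}⟩_{n=1}^∞ be an adequate sequence in S_i. Let C be an IP* set in S_1 × … × S_l and let m ∈ ℕ. Then for each i ∈ {1,…,l} there is a weak product subsystem ⟨x_{i,n}⟩_{n=1}^m of ⟨y_{i,n}⟩_{n=1}^∞ such that ×_{i=1}^l FS(⟨x_{i,n}⟩_{n=1}^m) ⊆ C. -/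
/-!
Work in the semigroup `(Finset ℕ, ∪)` with an idempotent ultrafilter `U` containing every tail
set `{F ≠ ∅ : N ≤ min F}`. Cantor pairing splits `ℕ` into blocks `{⟪t, n⟫ : n ∈ ℕ}`. For a choice
of nonempty slot sets `K i ⊆ range m`, send `F` to the point `(∑_{t ∈ F, n ∈ K i} y_{i,⟪t,n⟫})_i`
of `S_1 × ⋯ × S_l`. Since sums over disjoint index sets add up in a commutative partial semigroup,
this map is additive on `U`-almost all pairs `(F, G)` (those with `max F < min G`), so it pushes
`U` forward to an idempotent of `δ(S_1 × ⋯ × S_l)`; adequacy of the sequences `y_i` gives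
membership in `δ`. Hence `C` lies in each of these finitely many pushforwards, and a `U`-typical
`F` lies in all the preimages of `C`. Then `x_{i,n} = ∑_{t ∈ F} y_{i,⟪t,n⟫}` works: the sum of the
`x_{i,n}` over `n ∈ K i` is the `i`-th coordinate of the image of `F`.
-/

attribute [local instance] Ultrafilter.mul Ultrafilter.semigroup

theorem exists_idempotent_ultrafilter_forall_mem {M : Type*} [Semigroup M] {A : ℕ → Set M}
    (hA : Antitone A) (hne : ∀ n, (A n).Nonempty)
    (hmul : ∀ n, ∀ a ∈ A n, ∀ b ∈ A n, a * b ∈ A n) :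
    ∃ U : Ultrafilter M, U * U = U ∧ ∀ n, A n ∈ U := by
  obtain ⟨U, hU, hUU⟩ := exists_idempotent_in_compact_subsemigroup Ultrafilter.continuous_mul_left
    (⋂ n, {U : Ultrafilter M | A n ∈ U})
    (IsCompact.nonempty_iInter_of_sequence_nonempty_isCompact_isClosed _
      (fun n _ hU => Filter.mem_of_superset hU (hA n.le_succ))
      (fun n => ⟨pure (hne n).some, Ultrafilter.mem_pure.2 (hne n).some_mem⟩)
      (ultrafilter_isClosed_basic _).isCompact fun _ => ultrafilter_isClosed_basic _)
    (isClosed_iInter fun _ => ultrafilter_isClosed_basic _).isCompact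
    (fun U hU V hV => Set.mem_iInter.2 fun n => by
      show ∀ᶠ a in (U : Filter M), ∀ᶠ b in (V : Filter M), a * b ∈ A n
      filter_upwards [Set.mem_iInter.1 hU n] with a ha
      filter_upwards [Set.mem_iInter.1 hV n] with b hb
      exact hmul n a ha b hb)
  exact ⟨U, hUU, Set.mem_iInter.1 hU⟩

namespace PS

section Sums

variable {S : Type*}

/-- With `none` as an absorbing "undefined" element, a (Kleene-)associative commutative partial
operation becomes a commutative semigroup; finite sums are then products in `WithOne (Option S)`. -/
abbrev optionCommSemigroup (P : S → S → Option S) (hA : Assoc P) (hC : Comm P) :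
    CommSemigroup (Option S) where
  mul x y := x.bind fun a => y.bind (P a)
  mul_assoc x y z := by
    cases x <;> cases y <;> cases z <;>
      simp only [HMul.hMul, Option.bind_none, Option.bind_some, Option.bind_fun_none]
    exact hA _ _ _
  mul_comm x y := by
    cases x <;> cases y <;> first | rfl | exact hC _ _

theorem listSum_cons {P : S → S → Option S} (a : S) {l : List S} (hl : l ≠ []) :
    listSum P (a :: l) = (listSum P l).bind (P a) := by
  obtain ⟨b, l, rfl⟩ := List.exists_cons_of_ne_nil hl
  rfl

variable {P : S → S → Option S} (hA : Assoc P) (hC : Comm P)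
include hA hC

theorem coe_fsum (y : ℕ → S) {H : Finset ℕ} (hH : H.Nonempty) :
    letI := optionCommSemigroup P hA hC
    WithOne.coe (fsum P y H) = ∏ t ∈ H, WithOne.coe (some (y t)) := by
  let _ := optionCommSemigroup P hA hC
  have coe_listSum (l : List S) (hl : l ≠ []) :
      WithOne.coe (listSum P l) = (l.map fun a => WithOne.coe (some a)).prod := by
    induction l with
    | nil => exact absurd rfl hl
    | cons a l ih =>
      rcases eq_or_ne l [] with rfl | hl'
      · simp [listSum]
      · rw [listSum_cons a hl', List.map_cons, List.prod_cons, ← ih hl', ← WithOne.coe_mul]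
        rfl
  rw [fsum, coe_listSum _ (List.ne_nil_of_length_pos (by simpa using hH.card_pos)), List.map_map,
    Finset.prod_eq_multiset_prod, ← Finset.sort_eq H (· ≤ ·), Multiset.map_coe, Multiset.prod_coe]
  rfl

theorem fsum_union_s6 (y : ℕ → S) {F G : Finset ℕ} (hF : F.Nonempty) (hG : G.Nonempty)
    (hFG : Disjoint F G) :
    fsum P y (F ∪ G) = (fsum P y F).bind fun a => (fsum P y G).bind (P a) := by
  let _ := optionCommSemigroup P hA hC
  apply WithOne.coe_injective
  change _ = WithOne.coe (fsum P y F * fsum P y G)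
  rw [WithOne.coe_mul, coe_fsum hA hC y hF, coe_fsum hA hC y hG,
    coe_fsum hA hC y (hF.mono Finset.subset_union_left), Finset.prod_union hFG]

theorem fsum_biUnion (y x : ℕ → S) {K : Finset ℕ} {Q : ℕ → Finset ℕ} (hK : K.Nonempty)
    (hQ : (K : Set ℕ).PairwiseDisjoint Q) (hx : ∀ n ∈ K, fsum P y (Q n) = some (x n)) :
    fsum P y (K.biUnion Q) = fsum P x K := by
  let _ := optionCommSemigroup P hA hC
  have hQne : ∀ n ∈ K, (Q n).Nonempty := fun n hn => by
    by_contra h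
    simpa [Finset.not_nonempty_iff_eq_empty.1 h, fsum, listSum] using hx n hn
  obtain ⟨n, hn⟩ := hK
  apply WithOne.coe_injective
  rw [coe_fsum hA hC y ((hQne n hn).mono (Finset.subset_biUnion_of_mem Q hn)),
    coe_fsum hA hC x ⟨n, hn⟩, Finset.prod_biUnion hQ]
  refine Finset.prod_congr rfl fun k hk => ?_
  rw [← coe_fsum hA hC y (hQne k hk), hx k hk]

end Sums

section Cells

def cells (F K : Finset ℕ) : Finset ℕ := (F ×ˢ K).map Nat.pairEquiv.toEmbedding

theorem cells_union_left (F G K : Finset ℕ) : cells (F ∪ G) K = cells F K ∪ cells G K := by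
  rw [cells, Finset.union_product, Finset.map_union]
  rfl

theorem disjoint_cells_left {F G : Finset ℕ} (h : Disjoint F G) (K K' : Finset ℕ) :
    Disjoint (cells F K) (cells G K') :=
  (Finset.disjoint_map _).2 (Finset.disjoint_product.2 (Or.inl h))

theorem disjoint_cells_right (F : Finset ℕ) {K K' : Finset ℕ} (h : Disjoint K K') :
    Disjoint (cells F K) (cells F K') :=
  (Finset.disjoint_map _).2 (Finset.disjoint_product.2 (Or.inr h))

theorem cells_nonempty {F K : Finset ℕ} (hF : F.Nonempty) (hK : K.Nonempty) :
    (cells F K).Nonempty :=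
  (hF.product hK).map

theorem le_of_mem_cells {N s : ℕ} {F K : Finset ℕ} (hF : ∀ t ∈ F, N ≤ t) (hs : s ∈ cells F K) :
    N ≤ s := by
  obtain ⟨⟨t, n⟩, htn, rfl⟩ := Finset.mem_map.1 hs
  exact (hF t (Finset.mem_product.1 htn).1).trans (Nat.left_le_pair t n)

theorem cells_eq_biUnion (F K : Finset ℕ) : cells F K = K.biUnion fun n => cells F {n} := by
  ext s
  simp only [cells, Finset.mem_map_equiv, Finset.mem_product, Finset.mem_biUnion,
    Finset.mem_singleton]
  aesop

variable {S : Type*}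

/-- `y 0` is a junk value, taken only when the sum is undefined (see `fsum_cells`). -/
def cellSum (P : S → S → Option S) (y : ℕ → S) (F K : Finset ℕ) : S :=
  (fsum P y (cells F K)).getD (y 0)

variable {P : S → S → Option S} {y : ℕ → S}
  (hdef : ∀ H : Finset ℕ, H.Nonempty → (fsum P y H).isSome) {F : Finset ℕ} (hF : F.Nonempty)
include hdef hF

theorem fsum_cells {K : Finset ℕ} (hK : K.Nonempty) :
    fsum P y (cells F K) = some (cellSum P y F K) :=
  (Option.getD_of_ne_none (Option.isSome_iff_ne_none.1 (hdef _ (cells_nonempty hF hK))) _).symm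

theorem isWPS_cellSum_singleton (m : ℕ) : IsWPS P y 0 m fun n => cellSum P y F {n} :=
  ⟨fun n => cells F {n}, fun n _ => cells_nonempty hF (Finset.singleton_nonempty n),
    fun _ _ _ _ => Nat.zero_le _,
    fun _ _ _ _ h => disjoint_cells_right F (Finset.disjoint_singleton.2 h),
    fun n _ => fsum_cells hdef hF (Finset.singleton_nonempty n)⟩

variable (hA : Assoc P) (hC : Comm P)
include hA hC

theorem cellSum_union {G K : Finset ℕ} (hG : G.Nonempty) (hK : K.Nonempty) (hFG : Disjoint F G) :
    P (cellSum P y F K) (cellSum P y G K) = some (cellSum P y (F ∪ G) K) := by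
  rw [← fsum_cells hdef (hF.mono Finset.subset_union_left) hK, cells_union_left,
    fsum_union_s6 hA hC y (cells_nonempty hF hK) (cells_nonempty hG hK) (disjoint_cells_left hFG K K),
    fsum_cells hdef hF hK, fsum_cells hdef hG hK]
  rfl

theorem fsum_cellSum_singleton {K : Finset ℕ} (hK : K.Nonempty) :
    fsum P (fun n => cellSum P y F {n}) K = some (cellSum P y F K) := by
  rw [← fsum_cells hdef hF hK, cells_eq_biUnion, fsum_biUnion hA hC y _ hK]
  · exact fun n _ n' _ h => disjoint_cells_right F (Finset.disjoint_singleton.2 h)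
  · exact fun n _ => fsum_cells hdef hF (Finset.singleton_nonempty n)

end Cells

theorem isSum_map_of_eventually {M T : Type*} [Semigroup M] {U : Ultrafilter M} (hU : U * U = U)
    {P : T → T → Option T} {f : M → T}
    (hf : ∀ᶠ a in (U : Filter M), ∀ᶠ b in (U : Filter M), P (f a) (f b) = some (f (a * b))) :
    IsSum P (U.map f) (U.map f) (U.map f) := by
  intro A
  change f ⁻¹' A ∈ U ↔ ∀ᶠ a in (U : Filter M), ∀ᶠ b in (U : Filter M), f b ∈ shift P (f a) A
  conv_lhs => rw [← hU]
  refine Filter.eventually_congr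
    (hf.mono fun a ha => Filter.eventually_congr (ha.mono fun b hb => ?_))
  simp [shift, hb]

def tailSet (N : ℕ) : Set (Finset ℕ) := {F | F.Nonempty ∧ ∀ t ∈ F, N ≤ t}

abbrev unionSemigroup : Semigroup (Finset ℕ) where
  mul := (· ∪ ·)
  mul_assoc := Finset.union_assoc

attribute [local instance] unionSemigroup

theorem exists_idempotent_ultrafilter_tailSet :
    ∃ U : Ultrafilter (Finset ℕ), U * U = U ∧ ∀ N, tailSet N ∈ U :=
  exists_idempotent_ultrafilter_forall_mem
    (fun _ _ hNN' _ hF => ⟨hF.1, fun t ht => hNN'.trans (hF.2 t ht)⟩)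
    (fun N => ⟨{N}, Finset.singleton_nonempty N, by simp⟩)
    (fun _ _ hF _ hG => ⟨hF.1.mono Finset.subset_union_left, fun t ht =>
      (Finset.mem_union.1 ht).elim (hF.2 t) (hG.2 t)⟩)

section Product

variable {l : ℕ} {S : Fin l → Type*} {P : ∀ i, S i → S i → Option (S i)}

theorem prodOp_eq_some {a b c : ∀ i, S i} (h : ∀ i, P i (a i) (b i) = some (c i)) :
    prodOp P a b = some c := by
  have hdef : ∀ i, (P i (a i) (b i)).isSome := fun i => by simp [h i]
  rw [prodOp, dif_pos hdef]
  congr 1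
  funext i
  simp [h i]

theorem isSome_prodOp {a b : ∀ i, S i} (h : ∀ i, (P i (a i) (b i)).isSome) :
    (prodOp P a b).isSome := by
  rw [prodOp, dif_pos h]
  rfl

variable (P) in
def cellSums (y : ∀ i, ℕ → S i) (K : Fin l → Finset ℕ) (F : Finset ℕ) : ∀ i, S i :=
  fun i => cellSum (P i) (y i) F (K i)

variable {y : ∀ i, ℕ → S i} (hy : ∀ i, AdequateSeq (P i) (y i)) {K : Fin l → Finset ℕ}
  (hK : ∀ i, (K i).Nonempty) {U : Ultrafilter (Finset ℕ)} (hU : ∀ N, tailSet N ∈ U)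
include hy hK hU

theorem map_cellSums_mem_deltaS : U.map (cellSums P y K) ∈ deltaS (prodOp P) := by
  intro s
  choose N hN using fun i => (hy i).2 {s i} (Finset.singleton_nonempty _)
  refine Ultrafilter.mem_map.2 (Filter.mem_of_superset (hU (Finset.univ.sup N)) ?_)
  rintro F ⟨hF, hFN⟩
  refine isSome_prodOp fun i => hN i ⟨cells F (K i), cells_nonempty hF (hK i), fun t ht => ?_,
    fsum_cells (hy i).1 hF (hK i)⟩ (s i) (Finset.mem_singleton_self _)
  exact le_of_mem_cells (fun t ht => (Finset.le_sup (Finset.mem_univ i)).trans (hFN t ht)) ht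

theorem isSum_map_cellSums (hA : ∀ i, Assoc (P i)) (hC : ∀ i, Comm (P i)) (hUU : U * U = U) :
    IsSum (prodOp P) (U.map (cellSums P y K)) (U.map (cellSums P y K))
      (U.map (cellSums P y K)) := by
  apply isSum_map_of_eventually hUU
  filter_upwards [hU 0] with F hF
  filter_upwards [hU (F.max' hF.1 + 1)] with G hG
  have hFG : Disjoint F G := Finset.disjoint_left.2 fun t htF htG => by
    have := hG.2 t htG
    have := F.le_max' t htF
    omega
  exact prodOp_eq_some fun i => cellSum_union (hy i).1 hF.1 (hA i) (hC i) hG.1 (hK i) hFG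

end Product

end PS

theorem statement6_general {l : ℕ} {S : Fin l → Type*}
    (P : ∀ i, S i → S i → Option (S i))
    (hassoc : ∀ i, PS.Assoc (P i)) (hcomm : ∀ i, PS.Comm (P i))
    (y : ∀ i, ℕ → S i) (hy : ∀ i, PS.AdequateSeq (P i) (y i))
    (C : Set (∀ i, S i))
    (hC : ∀ p : Ultrafilter (∀ i, S i), p ∈ PS.deltaS (PS.prodOp P) →
      PS.IsSum (PS.prodOp P) p p p → C ∈ p)
    (m : ℕ) :
    ∃ x : ∀ i, ℕ → S i,
      (∀ i, PS.IsWPS (P i) (y i) 0 m (x i)) ∧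
      {f : ∀ i, S i | ∀ i, f i ∈ PS.FSfin (P i) (x i) m} ⊆ C := by
  open PS in
  obtain ⟨U, hUU, hU⟩ := exists_idempotent_ultrafilter_tailSet
  let Ks := Fintype.piFinset fun _ : Fin l => (Finset.range m).powerset.filter Finset.Nonempty
  have hKs : ∀ K ∈ Ks, ∀ᶠ F in (U : Filter (Finset ℕ)), cellSums P y K F ∈ C := fun K hK => by
    have hKne i : (K i).Nonempty := (Finset.mem_filter.1 (Fintype.mem_piFinset.1 hK i)).2
    exact Ultrafilter.mem_map.1 (hC _ (map_cellSums_mem_deltaS hy hKne hU)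
      (isSum_map_cellSums hy hKne hU hassoc hcomm hUU))
  obtain ⟨F, hFC, hF, -⟩ := (((Filter.eventually_all_finset Ks).2 hKs).and (hU 0)).exists
  refine ⟨fun i n => cellSum (P i) (y i) F {n}, fun i => isWPS_cellSum_singleton (hy i).1 hF m, ?_⟩
  intro f hf
  choose H hHne hHm hHf using hf
  have hf_eq : f = cellSums P y H F := funext fun i => Option.some_injective _ <| by
    rw [← hHf i, fsum_cellSum_singleton (hy i).1 hF (hassoc i) (hcomm i) (hHne i)]
    rfl
  rw [hf_eq]
  exact hFC H (Fintype.mem_piFinset.2 fun i => Finset.mem_filter.2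
    ⟨Finset.mem_powerset.2 (hHm i), hHne i⟩)

/-- If `C` is an `IP*` set in `S_1 × ⋯ × S_l` (i.e. `C` belongs to every
idempotent ultrafilter in `δ(S_1 × ⋯ × S_l)`) and `m ∈ ℕ`, then there are weak product
subsystems `⟨x_{i,n}⟩_{n=1}^m` of `⟨y_{i,n}⟩_{n=1}^∞` with
`×_{i=1}^l FS(⟨x_{i,n}⟩_{n=1}^m) ⊆ C`. -/
theorem statement6 {l : ℕ} {S : Fin l → Type*} [∀ i, Countable (S i)]
    (P : ∀ i, S i → S i → Option (S i))
    (hassoc : ∀ i, PS.Assoc (P i)) (hcomm : ∀ i, PS.Comm (P i))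
    (hadeq : ∀ i, PS.Adequate (P i))
    (y : ∀ i, ℕ → S i) (hy : ∀ i, PS.AdequateSeq (P i) (y i))
    (C : Set (∀ i, S i))
    (hC : ∀ p : Ultrafilter (∀ i, S i), p ∈ PS.deltaS (PS.prodOp P) →
      PS.IsSum (PS.prodOp P) p p p → C ∈ p)
    (m : ℕ) :
    ∃ x : ∀ i, ℕ → S i,
      (∀ i, PS.IsWPS (P i) (y i) 0 m (x i)) ∧
      {f : ∀ i, S i | ∀ i, f i ∈ PS.FSfin (P i) (x i) m} ⊆ C :=
  statement6_general P hassoc hcomm y hy C hC m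
end
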